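/- arXiv:math/0208214 — 4 statements merged into one kernel-verified Lean document; each statement's English description precedes it below -/
import Mathlib

section
/- Let X be a type, let A = FreeAlgebra (ZMod 2) X, let D₁ and D₂ be ℤ/2-linear derivations of A, and let φ : A ≃ A be a ℤ/2-algebra automorphism satisfying φ(D₁ a) = D₂(φ a) for all a ∈ A. Let I₁ and I₂ be the two-sided ideals of A generated by {D₁(ι x) : x ∈ X} and {D₂(ι x) : x ∈ X} respectively. Then φ maps I₁ onto I₂, and consequently the quotient rings A/I₁ and A/I₂ are isomorphic as ℤ/2-algebras. -/
/-- The quotient of a ℤ/2-algebra by a ring congruence is again a ℤ/2-algebra,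
via the quotient map. -/
noncomputable instance ringConQuotientAlgebra
    {R : Type*} [Ring R] [Algebra (ZMod 2) R] (c : RingCon R) :
    Algebra (ZMod 2) c.Quotient :=
  RingHom.toAlgebra' ((RingCon.mk' c).comp (algebraMap (ZMod 2) R)) (by
    intro r x
    show ((RingCon.mk' c).comp (algebraMap (ZMod 2) R)) r * x
      = x * ((RingCon.mk' c).comp (algebraMap (ZMod 2) R)) r
    rw [← ZMod.natCast_zmod_val r, map_natCast]
    exact (Nat.cast_commute _ x).eq)

/-!
A map satisfying the Leibniz rule kills `1` and is determined by its values on the generators,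
so every value `D a` lies in the ideal generated by the `D (ι x)`. If `φ ∘ D₁ = D₂ ∘ φ`, then
`φ` sends each generator `D₁ (ι x)` of the first ideal to `D₂ (φ (ι x))`, a value of `D₂`, hence
into the second ideal; applying the same to `φ⁻¹` gives the reverse inclusion, and `φ` descends
to the quotients.
-/

namespace FreeAlgebra

variable {R X : Type*} [CommRing R]

/-- The characteristic algebra of `D` is the quotient by this ideal. -/
def characteristicIdeal (D : FreeAlgebra R X →ₗ[R] FreeAlgebra R X) :
    TwoSidedIdeal (FreeAlgebra R X) :=
  TwoSidedIdeal.span (Set.range fun x : X => D (ι R x))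

theorem apply_mem_characteristicIdeal {D : FreeAlgebra R X →ₗ[R] FreeAlgebra R X}
    (hD : ∀ a b, D (a * b) = D a * b + a * D b) (a : FreeAlgebra R X) :
    D a ∈ characteristicIdeal D := by
  have hD_one : D 1 = 0 := by simpa using hD 1 1
  induction a with
  | grade0 r =>
    rw [Algebra.algebraMap_eq_smul_one, map_smul, hD_one, smul_zero]
    exact TwoSidedIdeal.zero_mem _
  | grade1 x => exact TwoSidedIdeal.subset_span ⟨x, rfl⟩
  | mul a b ha hb =>
    rw [hD]
    exact TwoSidedIdeal.add_mem _ (TwoSidedIdeal.mul_mem_right _ _ _ ha)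
      (TwoSidedIdeal.mul_mem_left _ _ _ hb)
  | add a b ha hb =>
    rw [map_add]
    exact TwoSidedIdeal.add_mem _ ha hb

theorem characteristicIdeal_le_comap {D₁ D₂ : FreeAlgebra R X →ₗ[R] FreeAlgebra R X}
    (hD₂ : ∀ a b, D₂ (a * b) = D₂ a * b + a * D₂ b)
    (φ : FreeAlgebra R X →+* FreeAlgebra R X) (hφ : ∀ a, φ (D₁ a) = D₂ (φ a)) :
    characteristicIdeal D₁ ≤ (characteristicIdeal D₂).comap φ := by
  refine TwoSidedIdeal.span_le.2 ?_
  rintro _ ⟨x, rfl⟩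
  rw [SetLike.mem_coe, TwoSidedIdeal.mem_comap φ, hφ]
  exact apply_mem_characteristicIdeal hD₂ _

theorem characteristicIdeal_eq_comap {D₁ D₂ : FreeAlgebra R X →ₗ[R] FreeAlgebra R X}
    (hD₁ : ∀ a b, D₁ (a * b) = D₁ a * b + a * D₁ b)
    (hD₂ : ∀ a b, D₂ (a * b) = D₂ a * b + a * D₂ b)
    (φ : FreeAlgebra R X ≃+* FreeAlgebra R X) (hφ : ∀ a, φ (D₁ a) = D₂ (φ a)) :
    characteristicIdeal D₁ = (characteristicIdeal D₂).comap φ := by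
  have hφ_symm : ∀ a, φ.symm (D₂ a) = D₁ (φ.symm a) := fun a => by
    rw [φ.symm_apply_eq, hφ, φ.apply_symm_apply]
  refine le_antisymm (characteristicIdeal_le_comap hD₂ φ hφ) fun a ha => ?_
  have := characteristicIdeal_le_comap hD₁ φ.symm hφ_symm ((TwoSidedIdeal.mem_comap φ).1 ha)
  rwa [TwoSidedIdeal.mem_comap, RingEquiv.coe_toRingHom, φ.symm_apply_apply] at this

end FreeAlgebra

/-- An automorphism of a free ℤ/2-algebra intertwining two derivations maps the
two-sided ideal generated by the values of the first derivation on the generators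
onto the corresponding ideal for the second derivation, and consequently the
quotients (the characteristic algebras) are isomorphic ℤ/2-algebras. -/
theorem characteristic_algebra_invariance
    {X : Type*}
    (D₁ D₂ : FreeAlgebra (ZMod 2) X →ₗ[ZMod 2] FreeAlgebra (ZMod 2) X)
    (hD₁ : ∀ a b : FreeAlgebra (ZMod 2) X, D₁ (a * b) = D₁ a * b + a * D₁ b)
    (hD₂ : ∀ a b : FreeAlgebra (ZMod 2) X, D₂ (a * b) = D₂ a * b + a * D₂ b)
    (φ : FreeAlgebra (ZMod 2) X ≃ₐ[ZMod 2] FreeAlgebra (ZMod 2) X)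
    (hφ : ∀ a : FreeAlgebra (ZMod 2) X, φ (D₁ a) = D₂ (φ a)) :
    (⇑φ '' ((TwoSidedIdeal.span
        (Set.range fun x : X => D₁ (FreeAlgebra.ι (ZMod 2) x))) :
          Set (FreeAlgebra (ZMod 2) X))
      = ((TwoSidedIdeal.span
        (Set.range fun x : X => D₂ (FreeAlgebra.ι (ZMod 2) x))) :
          Set (FreeAlgebra (ZMod 2) X)))
    ∧ Nonempty
      ((TwoSidedIdeal.span
          (Set.range fun x : X => D₁ (FreeAlgebra.ι (ZMod 2) x))).ringCon.Quotient
        ≃ₐ[ZMod 2]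
       (TwoSidedIdeal.span
          (Set.range fun x : X => D₂ (FreeAlgebra.ι (ZMod 2) x))).ringCon.Quotient) := by
  have h := FreeAlgebra.characteristicIdeal_eq_comap hD₁ hD₂ φ.toRingEquiv hφ
  refine ⟨?_, ⟨AlgEquiv.ofRingEquiv (f := RingCon.congr φ.toRingEquiv (congrArg _ h))
    fun r => congrArg _ (φ.commutes r)⟩⟩
  change φ '' (FreeAlgebra.characteristicIdeal D₁ : Set _) = FreeAlgebra.characteristicIdeal D₂
  rw [h, ← Set.image_preimage_eq (FreeAlgebra.characteristicIdeal D₂ : Set _) φ.surjective]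
  congr 1
  ext
  exact TwoSidedIdeal.mem_comap _
end

section
/- Let X and K be types, let A = FreeAlgebra (ZMod 2) X, and let S = FreeAlgebra (ZMod 2) (X ⊕ K × Bool); write α_k = ι(inr(k,false)) and β_k = ι(inr(k,true)). Let i : A → S be the algebra map induced by x ↦ ι(inl x) and let τ : S → A be the algebra map induced by inl x ↦ ι x and inr(k,b) ↦ 0. Let D be a ℤ/2-linear derivation of S satisfying: D(ι(inl x)) lies in the range of i for every x ∈ X, D(α_k) = 0 for every k, and D(β_k) = α_k for every k. Then there exists a ℤ/2-linear map H : S → S such that H(D s) + D(H s) = i(τ s) + s for all s ∈ S. -/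
/-!
The homotopy `H` is the top-right entry of the algebra map `S → M₂(S)` sending a generator `g` to
`!![i (τ g), h g; 0, g]`, where `h α_k = β_k` and `h` vanishes on the other generators. Being read
off from an algebra map, `H` is a twisted derivation: `H (a * b) = i (τ a) * H b + H a * b`.
Since `∂` commutes with `i ∘ τ`, in characteristic two the defect `H ∂ + ∂ H + i τ + id` obeys the
same twisted Leibniz rule; it kills the generators, hence vanishes on the whole free algebra.
-/

open FreeAlgebra

theorem FreeAlgebra.linearMap_eq_zero_of_leibniz {R X B : Type*} [CommSemiring R] [Ring B]
    [Algebra R B] (u v : FreeAlgebra R X →ₐ[R] B) (f : FreeAlgebra R X →ₗ[R] B)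
    (hmul : ∀ a b, f (a * b) = u a * f b + f a * v b) (hι : ∀ x, f (ι R x) = 0) : f = 0 := by
  have hf1 : f 1 = 0 := by simpa using hmul 1 1
  ext a
  induction a with
  | grade0 r => rw [Algebra.algebraMap_eq_smul_one, map_smul, hf1, smul_zero, LinearMap.zero_apply]
  | grade1 x => exact hι x
  | mul a b ha hb => simp_all
  | add a b ha hb => simp_all

namespace Stabilization

variable {R X K : Type*} [CommRing R]

local notation "𝒮" => FreeAlgebra R (X ⊕ K × Bool)

noncomputable def incl : FreeAlgebra R X →ₐ[R] 𝒮 :=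
  lift R fun x => ι R (Sum.inl x)

noncomputable def proj : 𝒮 →ₐ[R] FreeAlgebra R X :=
  lift R (Sum.elim (ι R) fun _ => 0)

@[simp] lemma incl_ι (x : X) : (incl (ι R x) : 𝒮) = ι R (Sum.inl x) := lift_ι_apply _ _

@[simp] lemma proj_ι_inl (x : X) : proj (ι R (Sum.inl x) : 𝒮) = ι R x := by simp [proj]

@[simp] lemma proj_ι_inr (p : K × Bool) : proj (ι R (Sum.inr p) : 𝒮) = 0 := by simp [proj]

lemma proj_comp_incl : proj.comp (incl (K := K)) = AlgHom.id R (FreeAlgebra R X) := by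
  ext; simp

@[simp] lemma proj_incl (a : FreeAlgebra R X) : proj (incl a : 𝒮) = a :=
  AlgHom.congr_fun proj_comp_incl a

noncomputable def homotopyGen : X ⊕ K × Bool → 𝒮
  | Sum.inl _ => 0
  | Sum.inr (k, false) => ι R (Sum.inr (k, true))
  | Sum.inr (_, true) => 0

noncomputable def homotopyMatrix : 𝒮 →ₐ[R] Matrix (Fin 2) (Fin 2) 𝒮 :=
  lift R fun g => !![incl (proj (ι R g)), homotopyGen g; 0, ι R g]

noncomputable def homotopy : 𝒮 →ₗ[R] 𝒮 :=
  Matrix.entryLinearMap R _ 0 1 ∘ₗ (homotopyMatrix (R := R) (X := X) (K := K)).toLinearMap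

lemma homotopyMatrix_apply (s : 𝒮) : homotopyMatrix s = !![incl (proj s), homotopy s; 0, s] := by
  suffices homotopyMatrix s 0 0 = incl (proj s) ∧ homotopyMatrix s 1 0 = 0 ∧
      homotopyMatrix s 1 1 = s by
    rw [Matrix.eta_fin_two (homotopyMatrix s), this.1, this.2.1, this.2.2]
    rfl
  induction s with
  | grade0 r => simp [Matrix.algebraMap_eq_diagonal]
  | grade1 g => simp [homotopyMatrix]
  | mul a b ha hb => simp [Matrix.mul_apply, ha, hb]
  | add a b ha hb => simp [ha, hb]

lemma homotopy_mul (a b : 𝒮) : homotopy (a * b) = incl (proj a) * homotopy b + homotopy a * b := by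
  simpa [homotopyMatrix_apply, Matrix.mul_apply] using
    congrArg (fun M => M 0 1) (map_mul homotopyMatrix a b)

lemma homotopy_ι (g : X ⊕ K × Bool) : homotopy (ι R g) = homotopyGen g := by
  simp [homotopy, homotopyMatrix]

@[simp] lemma homotopy_ι_inl (x : X) : homotopy (ι R (Sum.inl x) : 𝒮) = 0 := homotopy_ι _

@[simp] lemma homotopy_ι_inr_false (k : K) :
    homotopy (ι R (Sum.inr (k, false)) : 𝒮) = ι R (Sum.inr (k, true)) := homotopy_ι _

@[simp] lemma homotopy_ι_inr_true (k : K) : homotopy (ι R (Sum.inr (k, true)) : 𝒮) = 0 :=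
  homotopy_ι _

@[simp] lemma homotopy_incl (a : FreeAlgebra R X) : homotopy (incl a : 𝒮) = 0 := by
  have h := linearMap_eq_zero_of_leibniz incl incl
    (homotopy ∘ₗ (incl : FreeAlgebra R X →ₐ[R] 𝒮).toLinearMap)
    (fun a b => by simp [homotopy_mul]) (fun x => by simp)
  exact LinearMap.congr_fun h a

structure IsStabilizedDerivation (D : 𝒮 →ₗ[R] 𝒮) : Prop where
  leibniz : ∀ a b, D (a * b) = D a * b + a * D b
  ι_inl_mem : ∀ x : X, D (ι R (Sum.inl x)) ∈ Set.range incl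
  ι_inr_false : ∀ k : K, D (ι R (Sum.inr (k, false))) = 0
  ι_inr_true : ∀ k : K, D (ι R (Sum.inr (k, true))) = ι R (Sum.inr (k, false))

namespace IsStabilizedDerivation

variable {D : FreeAlgebra R (X ⊕ K × Bool) →ₗ[R] FreeAlgebra R (X ⊕ K × Bool)}

lemma map_incl_proj (hD : IsStabilizedDerivation D) (s : 𝒮) :
    D (incl (proj s)) = incl (proj (D s)) := by
  let P : 𝒮 →ₐ[R] 𝒮 := incl.comp proj
  have h := linearMap_eq_zero_of_leibniz P P (D ∘ₗ P.toLinearMap - P.toLinearMap ∘ₗ D)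
    (fun a b => by simp [hD.leibniz]; noncomm_ring) ?_
  · simpa [sub_eq_zero, P] using LinearMap.congr_fun h s
  rintro (x | ⟨k, _ | _⟩)
  · obtain ⟨a, ha⟩ := hD.ι_inl_mem x
    simp [P, ← ha]
  · simp [P, hD.ι_inr_false]
  · simp [P, hD.ι_inr_true]

lemma homotopy_relation [CharP R 2] (hD : IsStabilizedDerivation D) (s : 𝒮) :
    homotopy (D s) + D (homotopy s) = incl (proj s) + s := by
  let P : 𝒮 →ₐ[R] 𝒮 := incl.comp proj
  have h := linearMap_eq_zero_of_leibniz P (AlgHom.id R _)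
    (homotopy ∘ₗ D + D ∘ₗ homotopy - P.toLinearMap - LinearMap.id) (fun a b => by
      simp only [P, LinearMap.sub_apply, LinearMap.add_apply, LinearMap.comp_apply,
        LinearMap.id_apply, AlgHom.toLinearMap_apply, AlgHom.id_apply, AlgHom.comp_apply, map_mul,
        map_add, hD.leibniz, homotopy_mul, hD.map_incl_proj, mul_add, add_mul, CharTwo.sub_eq_add]
      -- what is left are the doubled terms `incl (proj (D a)) * homotopy b`,
      -- `homotopy a * D b` and `incl (proj a) * b`
      abel_nf
      simp only [CharTwo.two_zsmul, zero_add, add_zero]) ?_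
  · simpa [sub_eq_zero, sub_sub, P] using LinearMap.congr_fun h s
  rintro (x | ⟨k, _ | _⟩)
  · obtain ⟨a, ha⟩ := hD.ι_inl_mem x
    simp [P, ← ha, CharTwo.sub_eq_add]
  · simp [P, hD.ι_inr_false, hD.ι_inr_true]
  · simp [P, hD.ι_inr_true]

end IsStabilizedDerivation

end Stabilization

open Stabilization

/-- Stabilization of a free ℤ/2-DGA admits a chain homotopy between `i ∘ τ` and
the identity: if `D` is a derivation of the stabilized free algebra whose values
on the old generators lie in the image of the inclusion `i`, with `D α_k = 0`
and `D β_k = α_k` on the new generator pairs, then there is a ℤ/2-linear map `H`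
with `H ∘ D + D ∘ H = i ∘ τ + id`. -/
theorem stabilization_chain_homotopy
    {X K : Type*}
    (i : FreeAlgebra (ZMod 2) X →ₐ[ZMod 2] FreeAlgebra (ZMod 2) (X ⊕ K × Bool))
    (hi : i = FreeAlgebra.lift (ZMod 2)
      (fun x : X => FreeAlgebra.ι (ZMod 2) (Sum.inl x : X ⊕ K × Bool)))
    (τ : FreeAlgebra (ZMod 2) (X ⊕ K × Bool) →ₐ[ZMod 2] FreeAlgebra (ZMod 2) X)
    (hτ : τ = FreeAlgebra.lift (ZMod 2)
      (Sum.elim (fun x : X => FreeAlgebra.ι (ZMod 2) x) (fun _ : K × Bool => 0)))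
    (D : FreeAlgebra (ZMod 2) (X ⊕ K × Bool) →ₗ[ZMod 2]
      FreeAlgebra (ZMod 2) (X ⊕ K × Bool))
    (hD : ∀ a b : FreeAlgebra (ZMod 2) (X ⊕ K × Bool),
      D (a * b) = D a * b + a * D b)
    (hDX : ∀ x : X, D (FreeAlgebra.ι (ZMod 2) (Sum.inl x : X ⊕ K × Bool))
      ∈ Set.range i)
    (hDα : ∀ k : K,
      D (FreeAlgebra.ι (ZMod 2) (Sum.inr (k, false) : X ⊕ K × Bool)) = 0)
    (hDβ : ∀ k : K,
      D (FreeAlgebra.ι (ZMod 2) (Sum.inr (k, true) : X ⊕ K × Bool))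
        = FreeAlgebra.ι (ZMod 2) (Sum.inr (k, false) : X ⊕ K × Bool)) :
    ∃ H : FreeAlgebra (ZMod 2) (X ⊕ K × Bool) →ₗ[ZMod 2]
        FreeAlgebra (ZMod 2) (X ⊕ K × Bool),
      ∀ s : FreeAlgebra (ZMod 2) (X ⊕ K × Bool),
        H (D s) + D (H s) = i (τ s) + s := by
  subst hi hτ
  have hStab : IsStabilizedDerivation D := ⟨hD, hDX, hDα, hDβ⟩
  exact ⟨homotopy, hStab.homotopy_relation⟩
end

section
/- Let C₂ be the quotient of the free noncommutative ℤ/2-algebra on three generators a₁, a₂, a₃ by the two-sided ideal generated by a₂a₁ − 1 and a₂a₃ − 1. Then the images of a₁ and a₃ in C₂ are distinct. -/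
noncomputable section

/-- The generators of the free ℤ/2-algebra on three letters. -/
def c (i : Fin 3) : FreeAlgebra (ZMod 2) (Fin 3) := FreeAlgebra.ι (ZMod 2) i

/-- The simplified characteristic algebra
`C₂ = ℤ₂⟨a₁, a₂, a₃⟩/(a₂a₁ − 1, a₂a₃ − 1)`. -/
def C2 := (TwoSidedIdeal.span {c 1 * c 0 - 1, c 1 * c 2 - 1}).ringCon.Quotient

instance : Ring C2 :=
  inferInstanceAs (Ring (TwoSidedIdeal.span {c 1 * c 0 - 1, c 1 * c 2 - 1}).ringCon.Quotient)

/-- The quotient map onto `C₂`. -/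
def q : FreeAlgebra (ZMod 2) (Fin 3) →+* C2 :=
  RingCon.mk' (TwoSidedIdeal.span {c 1 * c 0 - 1, c 1 * c 2 - 1}).ringCon

/-- Right shift. -/
def A1 : Module.End (ZMod 2) (ℕ → ZMod 2) where
  toFun f n := match n with | 0 => 0 | Nat.succ m => f m
  map_add' f g := by funext n; cases n <;> simp
  map_smul' r f := by funext n; cases n <;> simp

/-- Left shift. -/
def A2 : Module.End (ZMod 2) (ℕ → ZMod 2) where
  toFun f n := f (n + 1)
  map_add' f g := by funext n; simp
  map_smul' r f := by funext n; simp

/-- Right shift plus projection to the 0th coordinate. -/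
def A3 : Module.End (ZMod 2) (ℕ → ZMod 2) where
  toFun f n := match n with | 0 => f 0 | Nat.succ m => f m
  map_add' f g := by funext n; cases n <;> simp
  map_smul' r f := by funext n; cases n <;> simp

/-- The representation of the free algebra. -/
def φ : FreeAlgebra (ZMod 2) (Fin 3) →ₐ[ZMod 2] Module.End (ZMod 2) (ℕ → ZMod 2) :=
  FreeAlgebra.lift (ZMod 2) ![A1, A2, A3]

lemma φ_rel1 : φ (c 1 * c 0 - 1) = 0 := by
  have : A2 * A1 = 1 := by
    ext f n
    rfl
  simp [φ, c, this]

lemma φ_rel2 : φ (c 1 * c 2 - 1) = 0 := by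
  have : A2 * A3 = 1 := by
    ext f n
    rfl
  simp [φ, c, this]

/-- In `C₂ = ℤ₂⟨a₁, a₂, a₃⟩/(1 = a₂a₁ = a₂a₃)` the images of `a₁` and `a₃` are
distinct. -/
theorem charAlgebraC2_a1_ne_a3 : q (c 0) ≠ q (c 2) := by
  intro h
  have hrel : (TwoSidedIdeal.span {c 1 * c 0 - 1, c 1 * c 2 - 1}).ringCon (c 0) (c 2) :=
    Quotient.exact' h
  rw [TwoSidedIdeal.rel_iff] at hrel
  have hker : c 0 - c 2 ∈ TwoSidedIdeal.ker φ.toRingHom := by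
    rw [TwoSidedIdeal.mem_span_iff] at hrel
    refine hrel _ ?_
    rintro x (rfl | rfl) <;> rw [SetLike.mem_coe, TwoSidedIdeal.mem_ker]
    · exact φ_rel1
    · exact φ_rel2
  rw [TwoSidedIdeal.mem_ker] at hker
  have := congrFun (LinearMap.congr_fun (by simpa [φ, c] using hker : A1 - A3 = 0) (fun _ => 1)) 0
  simp [A1, A3] at this

end
end

section
/- Let C₂ be the quotient of the free noncommutative ℤ/2-algebra on three generators a₁, a₂, a₃ by the two-sided ideal generated by a₂a₁ − 1 and a₂a₃ − 1. Then the image of a₂ in C₂ has a right inverse (namely the image of a₁) but has no left inverse: there is no element d ∈ C₂ with d·a₂ = 1. -/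
noncomputable section

/-- Left shift on sequences. -/
def S : (ℕ → ZMod 2) →ₗ[ZMod 2] (ℕ → ZMod 2) where
  toFun g := fun n => g (n + 1)
  map_add' _ _ := rfl
  map_smul' _ _ := rfl

/-- Right shift on sequences. -/
def R : (ℕ → ZMod 2) →ₗ[ZMod 2] (ℕ → ZMod 2) where
  toFun g := fun n => Nat.rec 0 (fun k _ => g k) n
  map_add' g h := by funext n; cases n <;> simp
  map_smul' r g := by funext n; cases n <;> simp

lemma SR : S * R = 1 := by
  ext g n
  rfl

/-- The representation of the free algebra sending `a₂` to the left shift and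
`a₁, a₃` to the right shift. -/
def f : FreeAlgebra (ZMod 2) (Fin 3) →ₐ[ZMod 2] Module.End (ZMod 2) (ℕ → ZMod 2) :=
  FreeAlgebra.lift (ZMod 2) (fun i => if i = 1 then S else R)

lemma hker : TwoSidedIdeal.span {c 1 * c 0 - 1, c 1 * c 2 - 1} ≤ TwoSidedIdeal.ker f.toRingHom := by
  intro x hx
  rw [TwoSidedIdeal.mem_span_iff] at hx
  apply hx
  intro y hy
  rcases hy with h | h <;> subst h <;>
    simp [TwoSidedIdeal.mem_ker, c, f, SR]

/-- In `C₂ = ℤ₂⟨a₁, a₂, a₃⟩/(1 = a₂a₁ = a₂a₃)` the image of `a₂` has the image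
of `a₁` as a right inverse, but has no left inverse. -/
theorem charAlgebraC2_a2_right_invertible_not_left_invertible :
    q (c 1) * q (c 0) = 1 ∧ ¬ ∃ d : C2, d * q (c 1) = 1 := by
  constructor
  · have hgen : (c 1 * c 0 - 1) ∈ ({c 1 * c 0 - 1, c 1 * c 2 - 1} :
        Set (FreeAlgebra (ZMod 2) (Fin 3))) := Set.mem_insert _ _
    have hgen' := TwoSidedIdeal.subset_span hgen
    have : q (c 1 * c 0 - 1) = 0 := by
      rw [← map_zero q]
      exact Quotient.sound' (((TwoSidedIdeal.span {c 1 * c 0 - 1, c 1 * c 2 - 1}).rel_iff _ _).2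
        (by simpa using hgen'))
    have := this
    rw [map_sub, map_mul, map_one, sub_eq_zero] at this
    exact this
  · rintro ⟨d, hd⟩
    obtain ⟨x, rfl⟩ : ∃ x, q x = d := Quotient.exists_rep d
    have h0 : q (x * c 1 - 1) = 0 := by
      rw [map_sub, map_mul, map_one, hd, sub_self]
    have hmem : x * c 1 - 1 ∈ TwoSidedIdeal.span {c 1 * c 0 - 1, c 1 * c 2 - 1} := by
      have h1 : ((TwoSidedIdeal.span {c 1 * c 0 - 1, c 1 * c 2 - 1}).ringCon)
          (x * c 1 - 1) 0 := Quotient.exact' h0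
      simpa using ((TwoSidedIdeal.span {c 1 * c 0 - 1, c 1 * c 2 - 1}).rel_iff _ _).1 h1
    have hf : f x * f (c 1) = 1 := by
      have := hker hmem
      rw [TwoSidedIdeal.mem_ker] at this
      simp only [AlgHom.toRingHom_eq_coe, RingHom.coe_coe, map_sub, map_mul, map_one,
        sub_eq_zero] at this
      exact this
    -- f (c 1) = S
    have hS : f (c 1) = S := by simp [f, c]
    rw [hS] at hf
    -- S is not injective: it kills e0
    have h1 : (f x * S) (fun n => if n = 0 then 1 else 0) = (fun n => if n = 0 then 1 else 0) := by
      rw [hf]; rfl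
    have h2 : S (fun n : ℕ => if n = 0 then (1 : ZMod 2) else 0) = 0 := by
      funext n; simp [S]
    rw [Module.End.mul_apply, h2, map_zero] at h1
    have := congrFun h1 0
    simp at this

end
end
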